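/- arXiv:1503.06290 — 5 statements merged into one kernel-verified Lean document; each statement's English description precedes it below -/
import Mathlib

section
/- Let a ∈ ℂ with Re a = 0 and a ≠ 0, let ν, μ ∈ ℂ with 0 < Re ν < Re μ, and let z ∈ ℂ with Re z > 0. Then ∫₀^∞ ∫₀^1 x^(μ−1) · e^(−z·x − a·x²·(1−2t)/2) · t^(ν−1) · (1−t)^(μ−ν−1) dt dx = (∫₀^∞ e^(−z·s) · s^(ν−1) · e^(a·s²/2) ds) · (∫₀^∞ e^(−z·s) · s^(μ−ν−1) · e^(−a·s²/2) ds). (This is Theorem 1, eq. (12): the Laplace transform (1/Γ(μ))∫₀^∞ x^(μ−1) e^(−zx−ax²/2) Φ(ν,μ;ax²) dx equals the product of parabolic cylinder functions (a^((ν−μ)/2)/(−a)^(ν/2)) · D₋ν(z/√(−a)) · D_(ν−μ)(z/√a), written with Φ replaced by its Euler integral and each D replaced by its Laplace-integral representation.) -/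
open MeasureTheory Complex Set

noncomputable def pcMap : ℝ × ℝ → ℝ × ℝ := fun p => (p.1 * p.2, p.1 * (1 - p.2))

noncomputable def pcDeriv (p : ℝ × ℝ) : ℝ × ℝ →L[ℝ] ℝ × ℝ :=
  LinearMap.toContinuousLinearMap (Matrix.toLin (Module.Basis.finTwoProd ℝ) (Module.Basis.finTwoProd ℝ)
    !![p.2, p.1; 1 - p.2, -p.1])

lemma hasFDerivAt_pcMap (p : ℝ × ℝ) : HasFDerivAt pcMap (pcDeriv p) p := by
  rw [pcDeriv, Matrix.toLin_finTwoProd_toContinuousLinearMap]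
  convert HasFDerivAt.prodMk (𝕜 := ℝ)
    (hasFDerivAt_fst.fun_mul hasFDerivAt_snd : HasFDerivAt (fun q : ℝ × ℝ => q.1 * q.2) _ p)
    (hasFDerivAt_fst.fun_mul ((hasFDerivAt_const (1:ℝ) p).sub hasFDerivAt_snd) :
      HasFDerivAt (fun q : ℝ × ℝ => q.1 * (1 - q.2)) _ p) using 2 <;> (try rfl) <;>
  · simp [add_comm, neg_smul, smul_neg, sub_eq_add_neg, zero_sub]
    try module

lemma pcDeriv_det (p : ℝ × ℝ) : (pcDeriv p).det = -p.1 := by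
  simp only [pcDeriv, LinearMap.det_toContinuousLinearMap, LinearMap.det_toLin,
    Matrix.det_fin_two_of]
  ring

lemma pcMap_image :
    pcMap '' (Ioi (0:ℝ) ×ˢ Ioo (0:ℝ) 1) = Ioi (0:ℝ) ×ˢ Ioi (0:ℝ) := by
  ext q
  constructor
  · rintro ⟨⟨x, t⟩, ⟨hx, ht0, ht1⟩, rfl⟩
    simp only [mem_Ioi, mem_Ioo] at hx ht0 ht1
    exact ⟨mul_pos hx ht0, mul_pos hx (by linarith)⟩
  · rintro ⟨hs, hu⟩
    obtain ⟨s, u⟩ := q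
    simp only [mem_Ioi] at hs hu
    have hsu : 0 < s + u := by linarith
    refine ⟨(s + u, s / (s + u)), ⟨hsu, div_pos hs hsu, (div_lt_one hsu).2 (by linarith)⟩, ?_⟩
    simp only [pcMap, Prod.mk.injEq]
    constructor
    · field_simp
    · field_simp
      try ring

lemma pcMap_injOn : InjOn pcMap (Ioi (0:ℝ) ×ˢ Ioo (0:ℝ) 1) := by
  rintro ⟨x, t⟩ ⟨hx, _⟩ ⟨x', t'⟩ ⟨hx', _⟩ h
  simp only [pcMap, Prod.mk.injEq] at h
  obtain ⟨h1, h2⟩ := h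
  have hxx : x = x' := by linear_combination h1 + h2
  subst hxx
  have htt : t = t' := mul_left_cancel₀ (ne_of_gt hx) h1
  rw [htt]

/-- Theorem 1, eq. (12): the Laplace transform of `x ↦ x^(μ-1) e^(-zx - ax²/2) Φ(ν,μ;ax²)`
(with Φ written via its Euler integral) equals the product of the Laplace-integral
representations of the two parabolic cylinder functions. -/
theorem product_parabolic_cylinder_laplace_phi
    (a ν μ z : ℂ) (ha : a.re = 0) (ha0 : a ≠ 0)
    (hν : 0 < ν.re) (hνμ : ν.re < μ.re) (hz : 0 < z.re) :
    (∫ x in Ioi (0:ℝ), ∫ t in Ioo (0:ℝ) 1,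
        (x:ℂ) ^ (μ - 1) * Complex.exp (-z * x - a * (x:ℂ)^2 * (1 - 2 * (t:ℂ)) / 2) *
          (t:ℂ) ^ (ν - 1) * ((1:ℂ) - (t:ℂ)) ^ (μ - ν - 1)) =
      (∫ s in Ioi (0:ℝ), Complex.exp (-z * s) * (s:ℂ) ^ (ν - 1) *
          Complex.exp (a * (s:ℂ)^2 / 2)) *
      (∫ s in Ioi (0:ℝ), Complex.exp (-z * s) * (s:ℂ) ^ (μ - ν - 1) *
          Complex.exp (-a * (s:ℂ)^2 / 2)) := by
  set f : ℝ → ℂ := fun s => Complex.exp (-z * s) * (s:ℂ) ^ (ν - 1) *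
      Complex.exp (a * (s:ℂ)^2 / 2) with hf_def
  set g : ℝ → ℂ := fun s => Complex.exp (-z * s) * (s:ℂ) ^ (μ - ν - 1) *
      Complex.exp (-a * (s:ℂ)^2 / 2) with hg_def
  -- integrability of f and g on (0, ∞)
  have key_int : ∀ (w : ℂ) (b : ℂ), b.re = 0 → 0 < w.re →
      IntegrableOn (fun s : ℝ => Complex.exp (-z * s) * (s:ℂ) ^ (w - 1) *
        Complex.exp (b * (s:ℂ)^2 / 2)) (Ioi 0) := by
    intro w b hb hw
    have hbound : IntegrableOn (fun s : ℝ => s ^ (w.re - 1) * Real.exp (-z.re * s ^ (1:ℝ)))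
        (Ioi 0) := integrableOn_rpow_mul_exp_neg_mul_rpow (by linarith) one_pos hz
    apply Integrable.mono' hbound
    · apply ContinuousOn.aestronglyMeasurable _ measurableSet_Ioi
      apply ContinuousOn.mul
      apply ContinuousOn.mul
      · exact (Complex.continuous_exp.comp
          (continuous_const.mul Complex.continuous_ofReal)).continuousOn
      · intro s hs
        exact (continuousAt_ofReal_cpow_const s (w - 1) (Or.inr (ne_of_gt hs))).continuousWithinAt
      · exact (Complex.continuous_exp.comp
          ((continuous_const.mul (Complex.continuous_ofReal.pow 2)).div_const 2)).continuousOn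
    · filter_upwards [ae_restrict_mem measurableSet_Ioi] with s hs
      have hs' : (0:ℝ) < s := hs
      rw [norm_mul, norm_mul,
        Complex.norm_exp, Complex.norm_exp, Complex.norm_cpow_eq_rpow_re_of_pos hs']
      have h1 : (-z * (s:ℂ)).re = -z.re * s := by simp [Complex.mul_re]
      have h2 : (b * (s:ℂ)^2 / 2).re = 0 := by
        have e : b * (s:ℂ)^2 / 2 = ((s^2/2 : ℝ) : ℂ) * b := by push_cast; ring
        rw [e, Complex.re_ofReal_mul, hb, mul_zero]
      rw [h1, h2, Real.exp_zero, mul_one, Real.rpow_one]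
      rw [mul_comm]
      simp [Complex.sub_re]
  have hIf : IntegrableOn f (Ioi 0) := key_int ν a ha hν
  have hIg : IntegrableOn g (Ioi 0) :=
    key_int (μ - ν) (-a) (by simp [ha]) (by simp [Complex.sub_re]; linarith)
  -- RHS as an integral over (0,∞)²
  have hprod : (∫ s in Ioi (0:ℝ), f s) * (∫ s in Ioi (0:ℝ), g s) =
      ∫ q in Ioi (0:ℝ) ×ˢ Ioi (0:ℝ), f q.1 * g q.2 := by
    rw [Measure.volume_eq_prod, setIntegral_prod_mul]
  -- integrability on the product set
  have hIfg : IntegrableOn (fun q : ℝ × ℝ => f q.1 * g q.2) (Ioi (0:ℝ) ×ˢ Ioi (0:ℝ)) := by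
    rw [IntegrableOn, Measure.volume_eq_prod, ← Measure.prod_restrict]
    exact hIf.mul_prod hIg
  set S : Set (ℝ × ℝ) := Ioi (0:ℝ) ×ˢ Ioo (0:ℝ) 1 with hS_def
  have hS : MeasurableSet S := (measurableSet_Ioi.prod measurableSet_Ioo)
  have hderiv : ∀ p ∈ S, HasFDerivWithinAt pcMap (pcDeriv p) S p :=
    fun p _ => (hasFDerivAt_pcMap p).hasFDerivWithinAt
  -- pointwise identity on S
  have key : ∀ p ∈ S, |(pcDeriv p).det| • (f (pcMap p).1 * g (pcMap p).2) =
      ((p.1:ℂ) ^ (μ - 1) * Complex.exp (-z * p.1 - a * (p.1:ℂ)^2 * (1 - 2 * (p.2:ℂ)) / 2) *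
        (p.2:ℂ) ^ (ν - 1) * ((1:ℂ) - (p.2:ℂ)) ^ (μ - ν - 1)) := by
    rintro ⟨x, t⟩ ⟨hx, ht0, ht1⟩
    simp only [mem_Ioi] at hx
    have h1t : (0:ℝ) < 1 - t := by linarith
    rw [pcDeriv_det, abs_neg, abs_of_pos hx]
    simp only [pcMap, hf_def, hg_def, Complex.real_smul, Complex.ofReal_mul, Complex.ofReal_sub,
      Complex.ofReal_one]
    rw [Complex.mul_cpow_ofReal_nonneg hx.le ht0.le,
      show ((x:ℂ) * (1 - (t:ℂ))) = ((x:ℝ):ℂ) * (((1 - t : ℝ)):ℂ) by push_cast; ring,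
      Complex.mul_cpow_ofReal_nonneg hx.le h1t.le]
    have hxne : ((x:ℝ):ℂ) ≠ 0 := Complex.ofReal_ne_zero.2 (ne_of_gt hx)
    have hxpow : ((x:ℝ):ℂ) ^ (μ - 1) = (x:ℂ) * ((x:ℂ) ^ (ν - 1) * (x:ℂ) ^ (μ - ν - 1)) := by
      rw [← Complex.cpow_add _ _ hxne]
      conv_lhs => rw [show μ - 1 = 1 + ((ν - 1) + (μ - ν - 1)) by ring]
      rw [Complex.cpow_add _ _ hxne, Complex.cpow_one]
    have hexp : Complex.exp (-z * x - a * (x:ℂ)^2 * (1 - 2 * (t:ℂ)) / 2) =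
        Complex.exp (-z * ((x:ℂ) * t)) * Complex.exp (a * ((x:ℂ) * t)^2 / 2) *
        (Complex.exp (-z * ((x:ℂ) * (1 - t))) *
          Complex.exp (-a * ((x:ℂ) * (1 - t))^2 / 2)) := by
      rw [← Complex.exp_add, ← Complex.exp_add, ← Complex.exp_add]
      congr 1
      ring
    rw [hxpow, hexp]
    push_cast
    ring
  calc
    (∫ x in Ioi (0:ℝ), ∫ t in Ioo (0:ℝ) 1,
        (x:ℂ) ^ (μ - 1) * Complex.exp (-z * x - a * (x:ℂ)^2 * (1 - 2 * (t:ℂ)) / 2) *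
          (t:ℂ) ^ (ν - 1) * ((1:ℂ) - (t:ℂ)) ^ (μ - ν - 1))
      = ∫ p in S, ((p.1:ℂ) ^ (μ - 1) *
          Complex.exp (-z * p.1 - a * (p.1:ℂ)^2 * (1 - 2 * (p.2:ℂ)) / 2) *
          (p.2:ℂ) ^ (ν - 1) * ((1:ℂ) - (p.2:ℂ)) ^ (μ - ν - 1)) := by
        have h1 : IntegrableOn (fun p : ℝ × ℝ =>
            |(pcDeriv p).det| • (f (pcMap p).1 * g (pcMap p).2)) S := by
          have := (integrableOn_image_iff_integrableOn_abs_det_fderiv_smul volume hS hderiv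
            pcMap_injOn (fun q : ℝ × ℝ => f q.1 * g q.2)).mp (by rw [pcMap_image]; exact hIfg)
          exact this
        have h2 : IntegrableOn (fun p : ℝ × ℝ =>
            (p.1:ℂ) ^ (μ - 1) * Complex.exp (-z * p.1 - a * (p.1:ℂ)^2 * (1 - 2 * (p.2:ℂ)) / 2) *
            (p.2:ℂ) ^ (ν - 1) * ((1:ℂ) - (p.2:ℂ)) ^ (μ - ν - 1)) S := h1.congr_fun key hS
        have h3 : Integrable (fun p : ℝ × ℝ =>
            (p.1:ℂ) ^ (μ - 1) * Complex.exp (-z * p.1 - a * (p.1:ℂ)^2 * (1 - 2 * (p.2:ℂ)) / 2) *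
            (p.2:ℂ) ^ (ν - 1) * ((1:ℂ) - (p.2:ℂ)) ^ (μ - ν - 1))
            ((volume.restrict (Ioi (0:ℝ))).prod (volume.restrict (Ioo (0:ℝ) 1))) := by
          rw [Measure.prod_restrict, ← Measure.volume_eq_prod]
          exact h2
        have h4 : (∫ p in S, ((p.1:ℂ) ^ (μ - 1) *
            Complex.exp (-z * p.1 - a * (p.1:ℂ)^2 * (1 - 2 * (p.2:ℂ)) / 2) *
            (p.2:ℂ) ^ (ν - 1) * ((1:ℂ) - (p.2:ℂ)) ^ (μ - ν - 1))) =
            ∫ p, ((p.1:ℂ) ^ (μ - 1) *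
            Complex.exp (-z * p.1 - a * (p.1:ℂ)^2 * (1 - 2 * (p.2:ℂ)) / 2) *
            (p.2:ℂ) ^ (ν - 1) * ((1:ℂ) - (p.2:ℂ)) ^ (μ - ν - 1))
            ∂((volume.restrict (Ioi (0:ℝ))).prod (volume.restrict (Ioo (0:ℝ) 1))) := by
          rw [Measure.prod_restrict, ← Measure.volume_eq_prod]
        rw [h4]
        exact integral_integral h3
    _ = ∫ p in S, |(pcDeriv p).det| • (f (pcMap p).1 * g (pcMap p).2) :=
        (setIntegral_congr_fun hS key).symm
    _ = ∫ q in pcMap '' S, f q.1 * g q.2 :=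
        (integral_image_eq_integral_abs_det_fderiv_smul volume hS hderiv pcMap_injOn
          (fun q : ℝ × ℝ => f q.1 * g q.2)).symm
    _ = (∫ s in Ioi (0:ℝ), f s) * (∫ s in Ioi (0:ℝ), g s) := by
        rw [pcMap_image, hprod]
end

section
/- Let ν, z ∈ ℂ with Re ν > 0. Then (∫₀^∞ e^(−z·t − t²/2) t^(ν−1) dt)² = 2 · ∫₀^∞ ∫₀^1 x^(2ν−1) · e^(−2·z·x − 2x² + x²·t) · t^(ν−1) · (1−t)^(−1/2) dt dx. (This is eq. (34) of Theorem 3: e^(z²/2)·D₋ν(z)² = (2^(2ν)/Γ(2ν)) ∫₀^∞ x^(2ν−1) e^(−2zx−2x²) Φ(ν, ν+1/2; x²) dx, written with Φ replaced by its Euler integral and D₋ν by its Laplace-integral representation, after simplification by the Gamma duplication formula.) -/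
/-!
By symmetry of the integrand `f a * f b`, the square of `∫₀^∞ f` is twice the integral of
`f a * f b` over the wedge `0 < b < a`. Parametrise the wedge by the arithmetic mean
`x = (a + b) / 2` and `t = a b / x² ∈ (0, 1)`, i.e. `a, b = x (1 ± √(1 - t))`, with Jacobian
`x / √(1 - t)`. Since `a + b = 2x` and `a b = x² t`, the product of the two Laplace kernels
depends only on `x` and `t`, and becomes the integrand on the right.
-/

open MeasureTheory Complex Set

theorem volume_diagonal_real : volume (diagonal ℝ) = 0 := by
  rw [Measure.volume_eq_prod, Measure.prod_apply measurableSet_diagonal]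
  simp [preimage, diagonal]

theorem integrableOn_mul_prod_self {𝕜 : Type*} [RCLike 𝕜] {f : ℝ → 𝕜} {s : Set ℝ}
    (hf : IntegrableOn f s) : IntegrableOn (fun p : ℝ × ℝ => f p.1 * f p.2) (s ×ˢ s) := by
  rw [IntegrableOn, Measure.volume_eq_prod, ← Measure.prod_restrict]
  exact hf.mul_prod hf

theorem sq_setIntegral_eq_two_mul_setIntegral_lt {𝕜 : Type*} [RCLike 𝕜] {f : ℝ → 𝕜}
    {s : Set ℝ} (hs : MeasurableSet s) (hf : IntegrableOn f s) :
    (∫ t in s, f t) ^ 2 = 2 * ∫ p in s ×ˢ s ∩ {p | p.2 < p.1}, f p.1 * f p.2 := by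
  set T : Set (ℝ × ℝ) := s ×ˢ s ∩ {p | p.2 < p.1}
  set T' : Set (ℝ × ℝ) := s ×ˢ s ∩ {p | p.1 < p.2}
  have hT' : MeasurableSet T' :=
    (hs.prod hs).inter (measurableSet_lt measurable_fst measurable_snd)
  have hF := integrableOn_mul_prod_self hf
  have hdisj : Disjoint T T' := by
    rw [disjoint_left]
    rintro p ⟨-, hlt⟩ ⟨-, hgt⟩
    exact lt_asymm (α := ℝ) hlt hgt
  have hsplit : s ×ˢ s =ᵐ[volume] (T ∪ T' : Set (ℝ × ℝ)) := by
    have hoff : ({p : ℝ × ℝ | p.2 < p.1} ∪ {p | p.1 < p.2} : Set (ℝ × ℝ)) =ᵐ[volume]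
        (univ : Set (ℝ × ℝ)) := by
      refine ae_eq_univ.2 (measure_mono_null (fun p hp => ?_) volume_diagonal_real)
      simp only [mem_compl_iff, mem_union, mem_ofPred_eq, not_or, not_lt] at hp
      exact le_antisymm hp.1 hp.2
    simpa [T, T', ← inter_union_distrib_left] using (ae_eq_refl (s ×ˢ s)).inter hoff.symm
  have hswap : ∫ p in T', f p.1 * f p.2 = ∫ p in T, f p.1 * f p.2 := by
    have hpre : Prod.swap ⁻¹' T = T' := by
      ext p
      simp only [T, T', mem_preimage, mem_inter_iff, mem_prod, Prod.fst_swap, Prod.snd_swap,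
        mem_ofPred_eq, and_comm (a := p.2 ∈ s)]
    rw [← hpre, Measure.volume_eq_prod]
    simpa [mul_comm] using
      (Measure.measurePreserving_swap (μ := volume) (ν := volume)).setIntegral_preimage_emb
        MeasurableEquiv.prodComm.measurableEmbedding (fun p : ℝ × ℝ => f p.1 * f p.2) T
  calc (∫ t in s, f t) ^ 2 = ∫ p in s ×ˢ s, f p.1 * f p.2 := by
        rw [sq, Measure.volume_eq_prod, setIntegral_prod_mul]
    _ = (∫ p in T, f p.1 * f p.2) + ∫ p in T', f p.1 * f p.2 :=
        (setIntegral_congr_set hsplit).trans (setIntegral_union hdisj hT'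
          (hF.mono_set inter_subset_left) (hF.mono_set inter_subset_left))
    _ = 2 * ∫ p in T, f p.1 * f p.2 := by rw [hswap, two_mul]

noncomputable def pairOfMeans (p : ℝ × ℝ) : ℝ × ℝ :=
  (p.1 * (1 + √(1 - p.2)), p.1 * (1 - √(1 - p.2)))

noncomputable def pairOfMeansDeriv (p : ℝ × ℝ) : ℝ × ℝ →L[ℝ] ℝ × ℝ :=
  LinearMap.toContinuousLinearMap
    (Matrix.toLin (Module.Basis.finTwoProd ℝ) (Module.Basis.finTwoProd ℝ)
      !![1 + √(1 - p.2), -p.1 / (2 * √(1 - p.2)); 1 - √(1 - p.2), p.1 / (2 * √(1 - p.2))])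

theorem pairOfMeans_fst_add_snd (p : ℝ × ℝ) :
    (pairOfMeans p).1 + (pairOfMeans p).2 = 2 * p.1 := by
  simp only [pairOfMeans]
  ring

theorem pairOfMeans_fst_mul_snd {p : ℝ × ℝ} (hp : p.2 ≤ 1) :
    (pairOfMeans p).1 * (pairOfMeans p).2 = p.1 ^ 2 * p.2 := by
  have hw : √(1 - p.2) ^ 2 = 1 - p.2 := Real.sq_sqrt (by linarith)
  simp only [pairOfMeans]
  linear_combination (-p.1 ^ 2) * hw

theorem hasFDerivAt_pairOfMeans {p : ℝ × ℝ} (hp : p.2 < 1) :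
    HasFDerivAt pairOfMeans (pairOfMeansDeriv p) p := by
  have hsqrt : HasDerivAt (fun t : ℝ => √(1 - t)) (-1 / (2 * √(1 - p.2))) p.2 := by
    simpa [div_eq_mul_inv] using
      ((hasDerivAt_id p.2).const_sub 1).sqrt (by simp only [id]; linarith)
  rw [pairOfMeansDeriv, Matrix.toLin_finTwoProd_toContinuousLinearMap]
  refine HasFDerivAt.congr_fderiv
    ((hasFDerivAt_fst.mul ((hsqrt.const_add 1).comp_hasFDerivAt p hasFDerivAt_snd)).prodMk
      (hasFDerivAt_fst.mul ((hsqrt.const_sub 1).comp_hasFDerivAt p hasFDerivAt_snd))) ?_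
  ext <;>
  simp only [Function.comp_apply, neg_smul, smul_neg, ContinuousLinearMap.comp_apply,
    ContinuousLinearMap.inl_apply, ContinuousLinearMap.inr_apply, ContinuousLinearMap.prod_apply,
    add_apply, smul_apply, ContinuousLinearMap.coe_snd', ContinuousLinearMap.coe_fst', smul_eq_mul,
    mul_zero, mul_one, zero_add, add_zero, neg_apply, neg_zero] <;>
  ring

theorem det_pairOfMeansDeriv {p : ℝ × ℝ} (hp : p.2 < 1) :
    (pairOfMeansDeriv p).det = p.1 / √(1 - p.2) := by
  have hw : √(1 - p.2) ≠ 0 := (Real.sqrt_pos.2 (by linarith)).ne'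
  simp only [pairOfMeansDeriv, LinearMap.det_toContinuousLinearMap, LinearMap.det_toLin,
    Matrix.det_fin_two_of]
  field_simp
  ring

theorem injOn_pairOfMeans : InjOn pairOfMeans (Ioi 0 ×ˢ Ioo 0 1) := by
  rintro ⟨x, t⟩ ⟨hx, -, ht⟩ ⟨x', t'⟩ ⟨-, -, ht'⟩ h
  have hsum := pairOfMeans_fst_add_snd (x, t)
  have hprod := pairOfMeans_fst_mul_snd (p := (x, t)) ht.le
  rw [h, pairOfMeans_fst_add_snd] at hsum
  rw [h, pairOfMeans_fst_mul_snd ht'.le] at hprod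
  obtain rfl : x' = x := by simpa using hsum
  obtain rfl : t' = t := mul_left_cancel₀ (pow_ne_zero 2 (ne_of_gt hx)) hprod
  rfl

theorem image_pairOfMeans :
    pairOfMeans '' (Ioi 0 ×ˢ Ioo 0 1) = Ioi 0 ×ˢ Ioi 0 ∩ {p | p.2 < p.1} := by
  ext ⟨a, b⟩
  constructor
  · rintro ⟨⟨x, t⟩, ⟨hx, ht0, ht1⟩, hab⟩
    have hx : 0 < x := hx
    have hw0 : 0 < √(1 - t) := Real.sqrt_pos.2 (by linarith [(ht1 : t < 1)])
    have hw1 : √(1 - t) < 1 := by rw [Real.sqrt_lt' one_pos]; linarith [(ht0 : 0 < t)]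
    simp only [pairOfMeans, Prod.mk.injEq] at hab
    obtain ⟨rfl, rfl⟩ := hab
    refine ⟨⟨?_, ?_⟩, ?_⟩ <;> simp only [mem_Ioi, mem_ofPred_eq] <;> nlinarith
  · rintro ⟨⟨ha, hb⟩, hba⟩
    simp only [mem_Ioi, mem_ofPred_eq] at ha hb hba
    have hr : √(1 - 4 * a * b / (a + b) ^ 2) = (a - b) / (a + b) := by
      rw [Real.sqrt_eq_iff_eq_sq _ (div_nonneg (by linarith) (by linarith))]
      · field_simp
        ring
      · rw [sub_nonneg, div_le_one (by positivity)]
        nlinarith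
    refine ⟨((a + b) / 2, 4 * a * b / (a + b) ^ 2), ⟨?_, ?_, ?_⟩, ?_⟩
    · simp only [mem_Ioi]
      linarith
    · positivity
    · rw [div_lt_one (by positivity)]
      nlinarith
    · simp only [pairOfMeans, hr, Prod.mk.injEq]
      constructor <;> field_simp <;> ring

theorem setIntegral_lt_eq_integral_integral_pairOfMeans {E : Type*} [NormedAddCommGroup E]
    [NormedSpace ℝ E] {g : ℝ × ℝ → E}
    (hg : IntegrableOn g (Ioi 0 ×ˢ Ioi 0 ∩ {p | p.2 < p.1})) :
    ∫ p in Ioi 0 ×ˢ Ioi 0 ∩ {p | p.2 < p.1}, g p =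
      ∫ x in Ioi 0, ∫ t in Ioo 0 1, (x / √(1 - t)) • g (pairOfMeans (x, t)) := by
  have hS : MeasurableSet (Ioi (0 : ℝ) ×ˢ Ioo (0 : ℝ) 1) :=
    measurableSet_Ioi.prod measurableSet_Ioo
  have hderiv : ∀ p ∈ Ioi (0 : ℝ) ×ˢ Ioo (0 : ℝ) 1,
      HasFDerivWithinAt pairOfMeans (pairOfMeansDeriv p) (Ioi 0 ×ˢ Ioo 0 1) p :=
    fun p hp => (hasFDerivAt_pairOfMeans hp.2.2).hasFDerivWithinAt
  have hdet : ∀ p ∈ Ioi (0 : ℝ) ×ˢ Ioo (0 : ℝ) 1,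
      |(pairOfMeansDeriv p).det| • g (pairOfMeans p) =
        (p.1 / √(1 - p.2)) • g (pairOfMeans p) := by
    rintro p ⟨hx, -, ht⟩
    rw [det_pairOfMeansDeriv ht, abs_of_nonneg (div_nonneg (le_of_lt hx) (Real.sqrt_nonneg _))]
  rw [← image_pairOfMeans] at hg ⊢
  have hint := ((integrableOn_image_iff_integrableOn_abs_det_fderiv_smul volume hS hderiv
    injOn_pairOfMeans g).1 hg).congr_fun hdet hS
  rw [integral_image_eq_integral_abs_det_fderiv_smul volume hS hderiv injOn_pairOfMeans,
    setIntegral_congr_fun hS hdet, Measure.volume_eq_prod, setIntegral_prod _ hint]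

noncomputable def parabolicKernel (ν z : ℂ) (t : ℝ) : ℂ :=
  Complex.exp (-z * t - (t : ℂ) ^ 2 / 2) * (t : ℂ) ^ (ν - 1)

theorem integrableOn_parabolicKernel {ν : ℂ} (hν : 0 < ν.re) (z : ℂ) :
    IntegrableOn (parabolicKernel ν z) (Ioi 0) := by
  have hmeas : AEStronglyMeasurable (parabolicKernel ν z) (volume.restrict (Ioi 0)) := by
    refine ContinuousOn.aestronglyMeasurable (fun t ht => ?_) measurableSet_Ioi
    exact ((Complex.continuous_exp.comp (by fun_prop)).continuousAt.mul
      (continuousAt_ofReal_cpow_const t (ν - 1) (Or.inr (ne_of_gt ht)))).continuousWithinAt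
  refine ((integrableOn_rpow_mul_exp_neg_mul_sq (b := 1 / 4) (s := ν.re - 1) (by norm_num)
    (by linarith)).const_mul (Real.exp (z.re ^ 2))).mono' hmeas
    ((ae_restrict_iff' measurableSet_Ioi).2 (ae_of_all _ fun t (ht : 0 < t) => ?_))
  have hre : (-z * t - (t : ℂ) ^ 2 / 2).re = -(z.re * t) - t ^ 2 / 2 := by
    simp [pow_two]
  -- completing the square: `-z.re t - t²/2 ≤ z.re² - t²/4`
  have hexp : Real.exp (-(z.re * t) - t ^ 2 / 2) ≤
      Real.exp (z.re ^ 2) * Real.exp (-(1 / 4) * t ^ 2) := by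
    rw [← Real.exp_add, Real.exp_le_exp]
    nlinarith [sq_nonneg (z.re + t / 2)]
  rw [parabolicKernel, norm_mul, norm_exp, norm_cpow_eq_rpow_re_of_pos ht, hre, sub_re, one_re]
  calc Real.exp (-(z.re * t) - t ^ 2 / 2) * t ^ (ν.re - 1)
      ≤ Real.exp (z.re ^ 2) * Real.exp (-(1 / 4) * t ^ 2) * t ^ (ν.re - 1) := by gcongr
    _ = _ := by ring

theorem parabolicKernel_mul_parabolicKernel (ν z : ℂ) {a b : ℝ} (ha : 0 ≤ a) (hb : 0 ≤ b) :
    parabolicKernel ν z a * parabolicKernel ν z b =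
      Complex.exp (-z * ↑(a + b) - (↑(a + b) ^ 2 - 2 * ↑(a * b)) / 2) *
        (↑(a * b) : ℂ) ^ (ν - 1) := by
  rw [parabolicKernel, parabolicKernel, ofReal_mul, mul_cpow_ofReal_nonneg ha hb,
    show -z * ↑(a + b) - (↑(a + b) ^ 2 - 2 * (a * b : ℂ)) / 2 =
      (-z * a - (a : ℂ) ^ 2 / 2) + (-z * b - (b : ℂ) ^ 2 / 2) by push_cast; ring, exp_add]
  ring

theorem ofReal_inv_sqrt {u : ℝ} (hu : 0 ≤ u) :
    ((√u)⁻¹ : ℂ) = (u : ℂ) ^ (-(1 : ℂ) / 2) := by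
  rw [Real.sqrt_eq_rpow, ← ofReal_inv, ← Real.rpow_neg hu, ofReal_cpow hu]
  norm_num

theorem smul_parabolicKernel_mul_pairOfMeans (ν z : ℂ) {x t : ℝ} (hx : 0 < x) (ht0 : 0 < t)
    (ht1 : t < 1) :
    (x / √(1 - t)) • (parabolicKernel ν z (pairOfMeans (x, t)).1 *
      parabolicKernel ν z (pairOfMeans (x, t)).2) =
    (x : ℂ) ^ (2 * ν - 1) * Complex.exp (-2 * z * x - 2 * (x : ℂ) ^ 2 + (x : ℂ) ^ 2 * t) *
      (t : ℂ) ^ (ν - 1) * ((1 : ℂ) - t) ^ (-(1 : ℂ) / 2) := by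
  obtain ⟨⟨ha, hb⟩, -⟩ : pairOfMeans (x, t) ∈ Ioi 0 ×ˢ Ioi 0 ∩ {p | p.2 < p.1} :=
    image_pairOfMeans ▸ mem_image_of_mem _ ⟨hx, ht0, ht1⟩
  have hx0 : (x : ℂ) ≠ 0 := ofReal_ne_zero.2 hx.ne'
  have hpow : ((x ^ 2 * t : ℝ) : ℂ) ^ (ν - 1) =
      (x : ℂ) ^ (ν - 1) * (x : ℂ) ^ (ν - 1) * (t : ℂ) ^ (ν - 1) := by
    rw [sq, ofReal_mul, mul_cpow_ofReal_nonneg (by positivity) ht0.le, ofReal_mul,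
      mul_cpow_ofReal_nonneg hx.le hx.le]
  have hxpow :
      (x : ℂ) * ((x : ℂ) ^ (ν - 1) * (x : ℂ) ^ (ν - 1)) = (x : ℂ) ^ (2 * ν - 1) := by
    rw [← cpow_add _ _ hx0]
    nth_rw 1 [← cpow_one (x : ℂ)]
    rw [← cpow_add _ _ hx0]
    ring_nf
  rw [parabolicKernel_mul_parabolicKernel ν z (le_of_lt ha) (le_of_lt hb),
    pairOfMeans_fst_add_snd, pairOfMeans_fst_mul_snd ht1.le, hpow, real_smul, ofReal_div,
    div_eq_mul_inv, ofReal_inv_sqrt (by linarith), ← hxpow,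
    show (1 : ℂ) - t = ((1 - t : ℝ) : ℂ) by push_cast; ring]
  push_cast
  ring_nf

/-- Theorem 3, eq. (34): `e^(z²/2) D₋ν(z)² = (2^(2ν)/Γ(2ν)) ∫₀^∞ x^(2ν-1) e^(-2zx-2x²)
Φ(ν, ν+1/2; x²) dx`, with Φ replaced by its Euler integral and D₋ν by its
Laplace-integral representation, after simplification by the Gamma duplication formula. -/
theorem square_parabolic_cylinder_phi_integral
    (ν z : ℂ) (hν : 0 < ν.re) :
    (∫ t in Ioi (0:ℝ), Complex.exp (-z * t - (t:ℂ)^2 / 2) * (t:ℂ) ^ (ν - 1)) ^ 2 =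
    2 * ∫ x in Ioi (0:ℝ), ∫ t in Ioo (0:ℝ) 1,
        (x:ℂ) ^ (2 * ν - 1) *
          Complex.exp (-2 * z * x - 2 * (x:ℂ)^2 + (x:ℂ)^2 * t) *
          (t:ℂ) ^ (ν - 1) * ((1:ℂ) - (t:ℂ)) ^ (-(1:ℂ)/2) := by
  have hK := integrableOn_parabolicKernel hν z
  change (∫ t in Ioi 0, parabolicKernel ν z t) ^ 2 = _
  rw [sq_setIntegral_eq_two_mul_setIntegral_lt measurableSet_Ioi hK,
    setIntegral_lt_eq_integral_integral_pairOfMeans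
      ((integrableOn_mul_prod_self hK).mono_set inter_subset_left)]
  congr 1
  refine setIntegral_congr_fun measurableSet_Ioi fun x hx => ?_
  exact setIntegral_congr_fun measurableSet_Ioo fun t ht =>
    smul_parabolicKernel_mul_pairOfMeans ν z hx ht.1 ht.2
end

section
/- Let ν, z ∈ ℂ with Re ν > 0. Then (∫₀^∞ e^(−z·t − t²/2) t^(ν−1) dt) · (∫₀^∞ e^(z·t − t²/2) t^(ν−1) dt) = 2 · ∫₀^∞ ∫₀^∞ cosh(2·z·x) · x^(2ν−1) · e^(−2x² − x²·u) · u^(ν−1) · (1+u)^(−1/2) du dx. (This is eq. (35) of Theorem 3: e^(z²/2)·D₋ν(z)·D₋ν(−z) = (2/Γ(ν)) ∫₀^∞ cosh(2zx) x^(2ν−1) e^(−2x²) Ψ(ν, ν+1/2; x²) dx, written with Ψ replaced by its integral representation and each D by its Laplace-integral representation.) -/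
open MeasureTheory Complex Set

lemma aux_meas (ν w : ℂ) : AEStronglyMeasurable
    (fun t : ℝ => Complex.exp (w*t - (t:ℂ)^2/2) * (t:ℂ)^(ν-1))
    (volume.restrict (Ioi 0)) := by
  apply ContinuousOn.aestronglyMeasurable _ measurableSet_Ioi
  apply ContinuousOn.mul
  · apply Continuous.continuousOn
    exact Complex.continuous_exp.comp (((continuous_const.mul Complex.continuous_ofReal)).sub
      ((Complex.continuous_ofReal.pow 2).div_const 2))
  · intro t ht
    exact (Complex.continuousAt_ofReal_cpow_const t _ (Or.inr (ne_of_gt ht))).continuousWithinAt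

lemma aux_int (ν w : ℂ) (hν : 0 < ν.re) :
    IntegrableOn (fun t : ℝ => Complex.exp (w*t - (t:ℂ)^2/2) * (t:ℂ)^(ν-1)) (Ioi 0) := by
  refine Integrable.mono' (g := fun t : ℝ => Real.exp (w.re^2) * (t ^ (ν.re - 1) * Real.exp (-(4⁻¹) * t^2)))
    (((integrable_rpow_mul_exp_neg_mul_sq (by norm_num) (by linarith)).const_mul _).integrableOn)
    (aux_meas ν w) ?_
  filter_upwards [ae_restrict_mem measurableSet_Ioi] with t ht
  rw [norm_mul]
  have h1 : ‖(t:ℂ)^(ν-1)‖ = t ^ (ν.re - 1) := by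
    rw [Complex.norm_cpow_eq_rpow_re_of_pos ht]
    norm_num
  have h2 : ‖Complex.exp (w*t - (t:ℂ)^2/2)‖ = Real.exp (w.re * t - t^2/2) := by
    rw [Complex.norm_exp]
    congr 1
    have : w*(t:ℂ) - (t:ℂ)^2/2 = w*(t:ℂ) - ((t^2/2 : ℝ):ℂ) := by push_cast; ring
    rw [this]
    simp [Complex.sub_re, Complex.mul_re, ← Complex.ofReal_pow]
  rw [h1, h2, mul_comm (Real.exp _), mul_comm (Real.exp _)]
  rw [mul_assoc]
  gcongr
  · exact Real.rpow_nonneg ht.le _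
  rw [← Real.exp_add]
  apply Real.exp_le_exp.2
  nlinarith [sq_nonneg (w.re - t/2)]

lemma aux_cosh (ν z : ℂ) (t s : ℝ) :
    (Complex.exp (-z*t - (t:ℂ)^2/2) * (t:ℂ)^(ν-1) * (Complex.exp (z*s - (s:ℂ)^2/2) * (s:ℂ)^(ν-1))
      + Complex.exp (z*t - (t:ℂ)^2/2) * (t:ℂ)^(ν-1) * (Complex.exp (-z*s - (s:ℂ)^2/2) * (s:ℂ)^(ν-1)))/2
    = Complex.cosh (z*(t-s)) * Complex.exp (-((t:ℂ)^2+(s:ℂ)^2)/2) * (t:ℂ)^(ν-1) * (s:ℂ)^(ν-1) := by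
  rw [show (∀ w : ℂ, Complex.cosh w = (Complex.exp w + Complex.exp (-w))/2) from fun w => rfl,
    show z*((t:ℂ)-s) = z*t + -(z*s) by ring,
    show -z*(t:ℂ) - (t:ℂ)^2/2 = -(z*t) + -((t:ℂ)^2/2) by ring,
    show z*(t:ℂ) - (t:ℂ)^2/2 = z*t + -((t:ℂ)^2/2) by ring,
    show -z*(s:ℂ) - (s:ℂ)^2/2 = -(z*s) + -((s:ℂ)^2/2) by ring,
    show z*(s:ℂ) - (s:ℂ)^2/2 = z*s + -((s:ℂ)^2/2) by ring,
    show -((t:ℂ)^2+(s:ℂ)^2)/2 = -((t:ℂ)^2/2) + -((s:ℂ)^2/2) by ring,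
    show -(z*t + -(z*(s:ℂ))) = -(z*t) + z*s by ring]
  simp only [Complex.exp_add, Complex.exp_neg]
  ring

/-- The symmetrized integrand. -/
noncomputable def Hcf (ν z : ℂ) : ℝ×ℝ → ℂ := fun p =>
  Complex.cosh (z*((p.1:ℂ)-(p.2:ℂ))) * Complex.exp (-((p.1:ℂ)^2+(p.2:ℂ)^2)/2) *
    (p.1:ℂ)^(ν-1) * (p.2:ℂ)^(ν-1)

lemma Hcf_int (ν z : ℂ) (hν : 0 < ν.re) :
    Integrable (Hcf ν z) ((volume.restrict (Ioi 0)).prod (volume.restrict (Ioi 0))) := by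
  have h : (fun p : ℝ×ℝ =>
      (Complex.exp (-z*p.1 - (p.1:ℂ)^2/2) * (p.1:ℂ)^(ν-1) *
        (Complex.exp (z*p.2 - (p.2:ℂ)^2/2) * (p.2:ℂ)^(ν-1))
      + Complex.exp (z*p.1 - (p.1:ℂ)^2/2) * (p.1:ℂ)^(ν-1) *
        (Complex.exp (-z*p.2 - (p.2:ℂ)^2/2) * (p.2:ℂ)^(ν-1)))/2) = Hcf ν z :=
    funext fun p => (aux_cosh ν z p.1 p.2).trans rfl
  rw [← h]
  exact (((aux_int ν (-z) hν).mul_prod (aux_int ν z hν)).add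
    ((aux_int ν z hν).mul_prod (aux_int ν (-z) hν))).div_const 2

lemma Hcf_sym (ν z : ℂ) (p : ℝ×ℝ) : Hcf ν z (p.2, p.1) = Hcf ν z p := by
  simp only [Hcf]
  rw [show z*((p.2:ℂ)-(p.1:ℂ)) = -(z*((p.1:ℂ)-(p.2:ℂ))) by ring, Complex.cosh_neg,
    show -(((p.2:ℂ))^2+((p.1:ℂ))^2)/2 = -(((p.1:ℂ))^2+((p.2:ℂ))^2)/2 by ring]
  ring

lemma aux_main1 (ν z : ℂ) (hν : 0 < ν.re) :
    (∫ t in Ioi (0:ℝ), Complex.exp (-z * t - (t:ℂ)^2 / 2) * (t:ℂ) ^ (ν - 1)) *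
      (∫ t in Ioi (0:ℝ), Complex.exp (z * t - (t:ℂ)^2 / 2) * (t:ℂ) ^ (ν - 1))
    = ∫ p, Hcf ν z p ∂((volume.restrict (Ioi 0)).prod (volume.restrict (Ioi 0))) := by
  have h1 : Integrable (fun t : ℝ => Complex.exp (-z*t - (t:ℂ)^2/2) * (t:ℂ)^(ν-1))
      (volume.restrict (Ioi 0)) := aux_int ν (-z) hν
  have h2 : Integrable (fun t : ℝ => Complex.exp (z*t - (t:ℂ)^2/2) * (t:ℂ)^(ν-1))
      (volume.restrict (Ioi 0)) := aux_int ν z hν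
  calc (∫ t in Ioi (0:ℝ), Complex.exp (-z * t - (t:ℂ)^2 / 2) * (t:ℂ) ^ (ν - 1)) *
      (∫ t in Ioi (0:ℝ), Complex.exp (z * t - (t:ℂ)^2 / 2) * (t:ℂ) ^ (ν - 1))
      = ((∫ p : ℝ×ℝ, (fun t : ℝ => Complex.exp (-z*t - (t:ℂ)^2/2) * (t:ℂ)^(ν-1)) p.1 *
            (fun t : ℝ => Complex.exp (z*t - (t:ℂ)^2/2) * (t:ℂ)^(ν-1)) p.2
            ∂((volume.restrict (Ioi 0)).prod (volume.restrict (Ioi 0))))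
        + (∫ p : ℝ×ℝ, (fun t : ℝ => Complex.exp (z*t - (t:ℂ)^2/2) * (t:ℂ)^(ν-1)) p.1 *
            (fun t : ℝ => Complex.exp (-z*t - (t:ℂ)^2/2) * (t:ℂ)^(ν-1)) p.2
            ∂((volume.restrict (Ioi 0)).prod (volume.restrict (Ioi 0)))))/2 := by
        have e1 := integral_prod_mul (μ := volume.restrict (Ioi (0:ℝ)))
          (ν := volume.restrict (Ioi (0:ℝ)))
          (fun t : ℝ => Complex.exp (-z*t - (t:ℂ)^2/2) * (t:ℂ)^(ν-1))
          (fun t : ℝ => Complex.exp (z*t - (t:ℂ)^2/2) * (t:ℂ)^(ν-1))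
        have e2 := integral_prod_mul (μ := volume.restrict (Ioi (0:ℝ)))
          (ν := volume.restrict (Ioi (0:ℝ)))
          (fun t : ℝ => Complex.exp (z*t - (t:ℂ)^2/2) * (t:ℂ)^(ν-1))
          (fun t : ℝ => Complex.exp (-z*t - (t:ℂ)^2/2) * (t:ℂ)^(ν-1))
        rw [e1, e2]
        ring
    _ = ∫ p : ℝ×ℝ, ((fun t : ℝ => Complex.exp (-z*t - (t:ℂ)^2/2) * (t:ℂ)^(ν-1)) p.1 *
            (fun t : ℝ => Complex.exp (z*t - (t:ℂ)^2/2) * (t:ℂ)^(ν-1)) p.2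
          + (fun t : ℝ => Complex.exp (z*t - (t:ℂ)^2/2) * (t:ℂ)^(ν-1)) p.1 *
            (fun t : ℝ => Complex.exp (-z*t - (t:ℂ)^2/2) * (t:ℂ)^(ν-1)) p.2)/2
            ∂((volume.restrict (Ioi 0)).prod (volume.restrict (Ioi 0))) := by
        rw [integral_div, integral_add (h1.mul_prod h2) (h2.mul_prod h1)]
    _ = ∫ p, Hcf ν z p ∂((volume.restrict (Ioi 0)).prod (volume.restrict (Ioi 0))) := by
        refine integral_congr_ae (Filter.Eventually.of_forall fun p => ?_)
        exact (aux_cosh ν z p.1 p.2).trans rfl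

lemma aux_main2 (ν z : ℂ) (hν : 0 < ν.re) :
    (∫ p, Hcf ν z p ∂((volume.restrict (Ioi 0)).prod (volume.restrict (Ioi 0))))
    = 2 * ∫ p in {p : ℝ×ℝ | p.2 < p.1}, Hcf ν z p
        ∂((volume.restrict (Ioi 0)).prod (volume.restrict (Ioi 0))) := by
  set μ : Measure ℝ := volume.restrict (Ioi 0) with hμ
  set Hc := Hcf ν z with hHcdef
  have hHcint : Integrable Hc (μ.prod μ) := Hcf_int ν z hν
  have hdiagmeas : MeasurableSet {p : ℝ×ℝ | p.1 = p.2} :=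
    measurableSet_eq_fun measurable_fst measurable_snd
  have hdiag : (μ.prod μ) {p : ℝ×ℝ | p.1 = p.2} = 0 := by
    rw [Measure.prod_apply hdiagmeas]
    have h0 : ∀ x : ℝ, μ (Prod.mk x ⁻¹' {p : ℝ×ℝ | p.1 = p.2}) = 0 := by
      intro x
      have : (Prod.mk x ⁻¹' {p : ℝ×ℝ | p.1 = p.2}) = {x} := by ext y; simp [eq_comm]
      rw [this]
      exact le_antisymm ((Measure.restrict_apply_le _ _).trans (by simp)) zero_le
    simp [h0]
  set A : Set (ℝ×ℝ) := {p | p.2 < p.1} with hA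
  have hAmeas : MeasurableSet A := measurableSet_lt measurable_snd measurable_fst
  have hBeq : Aᶜ =ᵐ[μ.prod μ] ({p : ℝ×ℝ | p.1 < p.2} : Set (ℝ×ℝ)) := by
    have hne : ∀ᵐ p ∂(μ.prod μ), p.1 ≠ p.2 := by
      rw [ae_iff]
      convert hdiag using 2
      simp
    filter_upwards [hne] with p hp
    show (p ∈ Aᶜ) = (p ∈ {p : ℝ×ℝ | p.1 < p.2})
    simp only [eq_iff_iff, mem_compl_iff, hA, mem_setOf_eq, not_lt]
    exact ⟨fun h => lt_of_le_of_ne h hp, le_of_lt⟩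
  have hswap : ∫ p in ({p : ℝ×ℝ | p.1 < p.2} : Set (ℝ×ℝ)), Hc p ∂(μ.prod μ)
      = ∫ p in A, Hc p ∂(μ.prod μ) := by
    have hpre : ({p : ℝ×ℝ | p.1 < p.2} : Set (ℝ×ℝ)) = Prod.swap ⁻¹' A := by
      ext p; simp [A]
    rw [hpre, ← (Measure.measurePreserving_swap (μ := μ) (ν := μ)).setIntegral_preimage_emb
      (MeasurableEquiv.prodComm (α := ℝ) (β := ℝ)).measurableEmbedding Hc A]
    refine setIntegral_congr_fun (hAmeas.preimage measurable_swap) fun p _ => ?_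
    exact (Hcf_sym ν z p).symm
  calc ∫ p, Hc p ∂(μ.prod μ)
      = (∫ p in A, Hc p ∂(μ.prod μ)) + ∫ p in Aᶜ, Hc p ∂(μ.prod μ) := by
        rw [integral_add_compl hAmeas hHcint]
    _ = 2 * ∫ p in A, Hc p ∂(μ.prod μ) := by
        rw [show ∫ p in Aᶜ, Hc p ∂(μ.prod μ) = ∫ p in {p : ℝ×ℝ | p.1 < p.2}, Hc p ∂(μ.prod μ) from
          setIntegral_congr_set hBeq, hswap]; ring

noncomputable def Lclm : (ℝ×ℝ) →L[ℝ] (ℝ×ℝ) :=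
  ((2:ℝ) • ContinuousLinearMap.fst ℝ ℝ ℝ + ContinuousLinearMap.snd ℝ ℝ ℝ).prod
    (ContinuousLinearMap.snd ℝ ℝ ℝ)

lemma Lclm_apply (p : ℝ×ℝ) : Lclm p = (2*p.1 + p.2, p.2) := by
  simp [Lclm]

lemma Lclm_det : Lclm.det = 2 := by
  have : Lclm.det = (LinearMap.toMatrix (Module.Basis.finTwoProd ℝ) (Module.Basis.finTwoProd ℝ)
      Lclm.toLinearMap).det := by
    rw [LinearMap.det_toMatrix]
  rw [this, Matrix.det_fin_two]
  simp [LinearMap.toMatrix_apply, Lclm]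

lemma aux_main3 (ν z : ℂ) (hν : 0 < ν.re) :
    (∫ p in {p : ℝ×ℝ | p.2 < p.1}, Hcf ν z p
        ∂((volume.restrict (Ioi 0)).prod (volume.restrict (Ioi 0))))
      = 2 * ∫ x in Ioi (0:ℝ), ∫ s in Ioi (0:ℝ), Hcf ν z (2*x+s, s) := by
  set μ : Measure ℝ := volume.restrict (Ioi 0) with hμ
  set Hc := Hcf ν z with hHcdef
  have hHcint : Integrable Hc (μ.prod μ) := Hcf_int ν z hν
  have hprod : μ.prod μ = (volume : Measure (ℝ×ℝ)).restrict ((Ioi 0) ×ˢ (Ioi 0)) := by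
    rw [hμ, Measure.volume_eq_prod, Measure.prod_restrict]
  have hAmeas : MeasurableSet {p : ℝ×ℝ | p.2 < p.1} :=
    measurableSet_lt measurable_snd measurable_fst
  have hsq : MeasurableSet ((Ioi (0:ℝ)) ×ˢ (Ioi (0:ℝ))) :=
    measurableSet_Ioi.prod measurableSet_Ioi
  have hrr : (μ.prod μ).restrict {p : ℝ×ℝ | p.2 < p.1}
      = (volume : Measure (ℝ×ℝ)).restrict ({p : ℝ×ℝ | 0 < p.2 ∧ p.2 < p.1}) := by
    rw [hprod, Measure.restrict_restrict hAmeas]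
    congr 1
    ext p
    simp only [mem_inter_iff, mem_setOf_eq, mem_prod, mem_Ioi]
    constructor
    · rintro ⟨h1, h2, h3⟩; exact ⟨h3, h1⟩
    · rintro ⟨h1, h2⟩; exact ⟨h2, lt_trans h1 h2, h1⟩
  set L : ℝ×ℝ → ℝ×ℝ := fun p => (2*p.1 + p.2, p.2) with hL
  have hLd : ∀ p ∈ (Ioi (0:ℝ)) ×ˢ (Ioi (0:ℝ)),
      HasFDerivWithinAt L Lclm ((Ioi (0:ℝ)) ×ˢ (Ioi (0:ℝ))) p := by
    intro p _
    have h := Lclm.hasFDerivAt (x := p)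
    rw [show (⇑Lclm : ℝ×ℝ → ℝ×ℝ) = L from funext Lclm_apply] at h
    exact h.hasFDerivWithinAt
  have hLinj : InjOn L ((Ioi (0:ℝ)) ×ˢ (Ioi (0:ℝ))) := by
    rintro ⟨a,b⟩ _ ⟨c,d⟩ _ h
    simp only [L, Prod.mk.injEq] at h
    obtain ⟨h1, h2⟩ := h
    subst h2
    have : a = c := by linarith
    simp [this]
  have hLimg : L '' ((Ioi (0:ℝ)) ×ˢ (Ioi (0:ℝ))) = {p : ℝ×ℝ | 0 < p.2 ∧ p.2 < p.1} := by
    ext ⟨t, s⟩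
    simp only [mem_image, mem_prod, mem_Ioi, mem_setOf_eq, Prod.exists, L, Prod.mk.injEq]
    constructor
    · rintro ⟨x, s', ⟨hx, hs⟩, h1, rfl⟩
      exact ⟨hs, by linarith⟩
    · rintro ⟨hs, hst⟩
      exact ⟨(t-s)/2, s, ⟨by linarith, hs⟩, by ring, rfl⟩
  have hcv := integral_image_eq_integral_abs_det_fderiv_smul
    (volume : Measure (ℝ×ℝ)) hsq hLd hLinj Hc
  rw [hLimg] at hcv
  have key : ∫ p in {p : ℝ×ℝ | p.2 < p.1}, Hc p ∂(μ.prod μ)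
      = ∫ p in (Ioi (0:ℝ)) ×ˢ (Ioi (0:ℝ)), (2:ℝ) • Hc (L p) := by
    rw [show (∫ p in {p : ℝ×ℝ | p.2 < p.1}, Hc p ∂(μ.prod μ))
        = ∫ p in {p : ℝ×ℝ | 0 < p.2 ∧ p.2 < p.1}, Hc p from by rw [← hrr]]
    rw [hcv]
    congr 1
    ext p
    rw [Lclm_det]
    norm_num
  have hIL : Integrable (fun p => Hc (L p)) (μ.prod μ) := by
    have h2 := (integrableOn_image_iff_integrableOn_abs_det_fderiv_smul
      (volume : Measure (ℝ×ℝ)) hsq hLd hLinj Hc).mp ?_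
    · have h4 : IntegrableOn (fun p => Hc (L p)) ((Ioi (0:ℝ)) ×ˢ (Ioi (0:ℝ))) := by
        have h3 := h2.smul ((2:ℝ)⁻¹)
        have he : ((2:ℝ)⁻¹ • fun x => |Lclm.det| • Hc (L x)) = fun p => Hc (L p) := by
          funext p
          simp [Lclm_det, smul_smul, Complex.real_smul]
        rwa [he] at h3
      rwa [IntegrableOn, ← hprod] at h4
    · rw [hLimg]
      have : IntegrableOn Hc {p : ℝ×ℝ | 0 < p.2 ∧ p.2 < p.1} volume := by
        rw [IntegrableOn, ← hrr]
        exact hHcint.restrict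
      exact this
  have hfub : ∫ p, Hc (L p) ∂(μ.prod μ) = ∫ x in Ioi (0:ℝ), ∫ s in Ioi (0:ℝ), Hc (2*x+s, s) := by
    rw [hμ] at hIL ⊢
    rw [integral_prod _ hIL]
  rw [key, integral_smul,
    show (∫ p in (Ioi (0:ℝ)) ×ˢ (Ioi (0:ℝ)), Hc (L p)) = ∫ p, Hc (L p) ∂(μ.prod μ) from by
      rw [hprod], hfub]
  simp [Complex.real_smul]
  rfl

lemma aux_pt (ν z : ℂ) {x s : ℝ} (hx : 0 < x) (hs : 0 < s) :
    |(2*s+2*x)/x^2| • (Complex.cosh (2*z*x) * (x:ℂ)^(2*ν-1) *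
      Complex.exp (-2*(x:ℂ)^2 - (x:ℂ)^2*(((s^2+2*x*s)/x^2 : ℝ) : ℂ)) *
      (((s^2+2*x*s)/x^2 : ℝ) : ℂ)^(ν-1) * ((1:ℂ)+(((s^2+2*x*s)/x^2 : ℝ) : ℂ))^(-(1:ℂ)/2))
    = 2 * (Complex.cosh (z*(((2*x+s : ℝ) : ℂ) - (s:ℂ))) *
        Complex.exp (-((((2*x+s : ℝ) : ℂ))^2 + (s:ℂ)^2)/2) *
        ((2*x+s : ℝ) : ℂ)^(ν-1) * ((s:ℝ):ℂ)^(ν-1)) := by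
  have hxc : (x:ℂ) ≠ 0 := Complex.ofReal_ne_zero.mpr hx.ne'
  have hi : Complex.cosh (z*(((2*x+s : ℝ) : ℂ) - (s:ℂ))) = Complex.cosh (2*z*x) := by
    congr 1; push_cast; ring
  have hii : Complex.exp (-((((2*x+s : ℝ) : ℂ))^2 + (s:ℂ)^2)/2)
      = Complex.exp (-2*(x:ℂ)^2 - (x:ℂ)^2*(((s^2+2*x*s)/x^2 : ℝ) : ℂ)) := by
    congr 1; push_cast; field_simp; ring
  have e1 : ((((2*x+s)*s : ℝ)) : ℂ)^(ν-1) = ((2*x+s : ℝ) : ℂ)^(ν-1) * ((s:ℝ):ℂ)^(ν-1) := by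
    rw [Complex.ofReal_mul, Complex.mul_cpow_ofReal_nonneg (by positivity) hs.le]
  have e2 : ((x*(x*((s^2+2*x*s)/x^2)) : ℝ) : ℂ)^(ν-1)
      = (x:ℂ)^(ν-1) * ((x:ℂ)^(ν-1) * (((s^2+2*x*s)/x^2 : ℝ) : ℂ)^(ν-1)) := by
    rw [Complex.ofReal_mul, Complex.mul_cpow_ofReal_nonneg hx.le (by positivity),
      Complex.ofReal_mul, Complex.mul_cpow_ofReal_nonneg hx.le (by positivity)]
  have e3 : (((2*x+s)*s : ℝ)) = x*(x*((s^2+2*x*s)/x^2)) := by field_simp; ring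
  have e4 : ((2*x+s : ℝ) : ℂ)^(ν-1) * ((s:ℝ):ℂ)^(ν-1)
      = (x:ℂ)^(ν-1) * ((x:ℂ)^(ν-1) * (((s^2+2*x*s)/x^2 : ℝ) : ℂ)^(ν-1)) := by
    rw [← e1, e3, e2]
  have hiii : (x:ℂ)^(2*ν-1) * (((s^2+2*x*s)/x^2:ℝ) : ℂ)^(ν-1)
      = ↑x * (((2*x+s : ℝ) : ℂ)^(ν-1) * ((s:ℝ):ℂ)^(ν-1)) := by
    rw [show (2*ν-1:ℂ) = (ν-1)+((ν-1)+1) by ring, Complex.cpow_add _ _ hxc,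
      Complex.cpow_add _ _ hxc, Complex.cpow_one]
    linear_combination (x:ℂ) * e4.symm
  have hiv : ((1:ℂ) + (((s^2+2*x*s)/x^2 : ℝ) : ℂ))^(-(1:ℂ)/2) = ((x/(s+x) : ℝ) : ℂ) := by
    rw [show ((1:ℂ) + (((s^2+2*x*s)/x^2 : ℝ) : ℂ)) = (((1:ℝ) + (s^2+2*x*s)/x^2 : ℝ) : ℂ) from by
        push_cast; ring,
      show ((1:ℝ) + (s^2+2*x*s)/x^2) = ((s+x)/x)^2 from by field_simp; ring,
      show (-(1:ℂ)/2) = ((-(1/2) : ℝ):ℂ) by norm_num,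
      ← Complex.ofReal_cpow (by positivity)]
    congr 1
    rw [← Real.rpow_natCast ((s+x)/x) 2, ← Real.rpow_mul (by positivity)]
    norm_num
    rw [Real.rpow_neg_one, inv_div]
  have habs : |(2*s+2*x)/x^2| = (2*s+2*x)/x^2 := abs_of_pos (by positivity)
  have hsc : ((((2*s+2*x)/x^2 : ℝ)) : ℂ) * ↑x * ((x/(s+x):ℝ):ℂ) = 2 := by
    have h1 : (s:ℂ) + (x:ℂ) ≠ 0 := by
      rw [show (s:ℂ) + (x:ℂ) = ((s+x : ℝ):ℂ) by push_cast; ring]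
      exact Complex.ofReal_ne_zero.mpr (by positivity)
    push_cast
    field_simp
  rw [habs, Complex.real_smul, hi, hii, hiv]
  linear_combination (Complex.cosh (2*z*(x:ℂ)) *
      Complex.exp (-2*(x:ℂ)^2 - (x:ℂ)^2*(((s^2+2*x*s)/x^2 : ℝ) : ℂ)) *
      ((x/(s+x):ℝ):ℂ) * ((((2*s+2*x)/x^2 : ℝ)) : ℂ)) * hiii +
    (Complex.cosh (2*z*(x:ℂ)) *
      Complex.exp (-2*(x:ℂ)^2 - (x:ℂ)^2*(((s^2+2*x*s)/x^2 : ℝ) : ℂ)) *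
      ((2*x+s : ℝ) : ℂ)^(ν-1) * ((s:ℝ):ℂ)^(ν-1)) * hsc

lemma aux_sub (ν z : ℂ) {x : ℝ} (hx : 0 < x) :
    (∫ u in Ioi (0:ℝ), Complex.cosh (2*z*x) * (x:ℂ)^(2*ν-1) *
      Complex.exp (-2*(x:ℂ)^2 - (x:ℂ)^2*(u:ℂ)) * (u:ℂ)^(ν-1) * ((1:ℂ)+(u:ℂ))^(-(1:ℂ)/2))
    = 2 * ∫ s in Ioi (0:ℝ), Complex.cosh (z*(((2*x+s : ℝ) : ℂ) - (s:ℂ))) *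
        Complex.exp (-((((2*x+s : ℝ) : ℂ))^2 + (s:ℂ)^2)/2) *
        ((2*x+s : ℝ) : ℂ)^(ν-1) * ((s:ℝ):ℂ)^(ν-1) := by
  have hx2 : (0:ℝ) < x^2 := by positivity
  set φ : ℝ → ℝ := fun s => (s^2+2*x*s)/x^2 with hφ
  have hder : ∀ s ∈ Ioi (0:ℝ), HasDerivWithinAt φ ((2*s+2*x)/x^2) (Ioi 0) s := by
    intro s _
    have h := (((hasDerivAt_pow 2 s).add ((hasDerivAt_id s).const_mul (2*x))).div_const (x^2))
    have : (((2:ℕ):ℝ) * s ^ (2-1) + 2*x*1)/x^2 = (2*s+2*x)/x^2 := by push_cast; ring_nf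
    rw [this] at h
    exact h.hasDerivWithinAt
  have hinj : InjOn φ (Ioi 0) := by
    apply StrictMonoOn.injOn
    intro a ha b hb hab
    simp only [φ, mem_Ioi] at *
    apply div_lt_div_of_pos_right ?_ hx2
    nlinarith
  have himg : φ '' Ioi 0 = Ioi 0 := by
    ext u
    simp only [mem_image, mem_Ioi, φ]
    constructor
    · rintro ⟨s, hs, rfl⟩
      positivity
    · intro hu
      set a := Real.sqrt (1+u) with ha
      have ha2 : a^2 = 1+u := Real.sq_sqrt (by linarith)
      have ha1 : 1 < a := by nlinarith [Real.sqrt_nonneg (1+u)]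
      refine ⟨x*(a-1), by nlinarith, ?_⟩
      rw [div_eq_iff hx2.ne']
      nlinarith [ha2]
  conv_lhs => rw [show Ioi (0:ℝ) = φ '' Ioi 0 from himg.symm,
    integral_image_eq_integral_abs_deriv_smul measurableSet_Ioi hder hinj]
  rw [show (∫ s in Ioi (0:ℝ), |(2*s+2*x)/x^2| • (Complex.cosh (2*z*x) * (x:ℂ)^(2*ν-1) *
      Complex.exp (-2*(x:ℂ)^2 - (x:ℂ)^2*((φ s : ℝ) : ℂ)) *
      ((φ s : ℝ) : ℂ)^(ν-1) * ((1:ℂ)+((φ s : ℝ) : ℂ))^(-(1:ℂ)/2)))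
      = ∫ s in Ioi (0:ℝ), 2 * (Complex.cosh (z*(((2*x+s : ℝ) : ℂ) - (s:ℂ))) *
        Complex.exp (-((((2*x+s : ℝ) : ℂ))^2 + (s:ℂ)^2)/2) *
        ((2*x+s : ℝ) : ℂ)^(ν-1) * ((s:ℝ):ℂ)^(ν-1)) from
    setIntegral_congr_fun measurableSet_Ioi fun s hs => aux_pt ν z hx hs]
  rw [MeasureTheory.integral_const_mul]

/-- Theorem 3, eq. (35): `e^(z²/2) D₋ν(z) D₋ν(-z) = (2/Γ(ν)) ∫₀^∞ cosh(2zx) x^(2ν-1)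
e^(-2x²) Ψ(ν, ν+1/2; x²) dx`, with Ψ replaced by its integral representation and each D
by its Laplace-integral representation. -/
theorem product_parabolic_cylinder_psi_cosh_integral
    (ν z : ℂ) (hν : 0 < ν.re) :
    (∫ t in Ioi (0:ℝ), Complex.exp (-z * t - (t:ℂ)^2 / 2) * (t:ℂ) ^ (ν - 1)) *
      (∫ t in Ioi (0:ℝ), Complex.exp (z * t - (t:ℂ)^2 / 2) * (t:ℂ) ^ (ν - 1)) =
    2 * ∫ x in Ioi (0:ℝ), ∫ u in Ioi (0:ℝ),
        Complex.cosh (2 * z * x) * (x:ℂ) ^ (2 * ν - 1) *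
          Complex.exp (-2 * (x:ℂ)^2 - (x:ℂ)^2 * u) *
          (u:ℂ) ^ (ν - 1) * ((1:ℂ) + (u:ℂ)) ^ (-(1:ℂ)/2) := by
  rw [aux_main1 ν z hν, aux_main2 ν z hν, aux_main3 ν z hν]
  rw [show (∫ x in Ioi (0:ℝ), ∫ u in Ioi (0:ℝ),
        Complex.cosh (2 * z * x) * (x:ℂ) ^ (2 * ν - 1) *
          Complex.exp (-2 * (x:ℂ)^2 - (x:ℂ)^2 * u) *
          (u:ℂ) ^ (ν - 1) * ((1:ℂ) + (u:ℂ)) ^ (-(1:ℂ)/2))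
      = ∫ x in Ioi (0:ℝ), 2 * ∫ s in Ioi (0:ℝ), Hcf ν z (2*x+s, s) from
    setIntegral_congr_fun measurableSet_Ioi fun x hx => aux_sub ν z hx]
  rw [MeasureTheory.integral_const_mul]
end

section
/- Let g, h : (0,∞) → ℂ be measurable functions that are Lebesgue integrable on (0,∞). Then (∫₀^∞ g(x) dx) · (∫₀^∞ h(x) dx) = ∫₀^∞ ∫₀^∞ g(x)·h(x+t) dx dt + ∫₀^∞ ∫₀^∞ h(x)·g(x+t) dx dt. (This is the auxiliary identity (40) proved in the paper, obtained by noting that the right-hand side equals −∫₀^∞ (G'(x)H(x) + G(x)H'(x)) dx = G(0)H(0) for the tail integrals G(x) = ∫_x^∞ g and H(x) = ∫_x^∞ h.) -/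
/-!
Both sides are integrals of `g x * h y` over the quadrant `(0,∞)²`. The diagonal `x = y` is
Lebesgue-null, so the quadrant splits into the halves `x < y` and `y < x`. The shear
`(x, t) ↦ (x, x + t)` maps `(0,∞)²` measure-preservingly onto the half `0 < x < y`, turning its
integral into `∫₀^∞ ∫₀^∞ g(x) h(x + t) dx dt` by Fubini; reflecting in the diagonal treats the
other half, with the roles of `g` and `h` exchanged.
-/

open MeasureTheory Set

namespace MeasureTheory.Measure

lemma prod_diagonal_eq_zero {α : Type*} [MeasurableSpace α] [MeasurableEq α]
    (μ ν : Measure α) [SFinite ν] [NullSingletonClass ν] :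
    μ.prod ν (diagonal α) = 0 := by
  rw [prod_apply measurableSet_diagonal]
  have slice (x : α) : Prod.mk x ⁻¹' diagonal α = {x} := by ext; simp [eq_comm]
  simp [slice]

end MeasureTheory.Measure

variable {E : Type*} [NormedAddCommGroup E] [NormedSpace ℝ E]

lemma setIntegral_inter_fst_lt_snd_add_inter_snd_lt_fst {f : ℝ × ℝ → E} {s : Set (ℝ × ℝ)}
    (hs : MeasurableSet s) (hf : IntegrableOn f s) :
    (∫ p in s ∩ {p | p.1 < p.2}, f p) + ∫ p in s ∩ {p | p.2 < p.1}, f p = ∫ p in s, f p := by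
  have hdisj : Disjoint (s ∩ {p | p.1 < p.2}) (s ∩ {p | p.2 < p.1}) :=
    disjoint_left.2 fun p h₁ h₂ => lt_asymm (α := ℝ) h₁.2 h₂.2
  have hunion : s ∩ {p | p.1 < p.2} ∪ s ∩ {p | p.2 < p.1} = s \ diagonal ℝ := by
    ext p; simp [← and_or_left, lt_or_lt_iff_ne]
  rw [← setIntegral_union hdisj
    (hs.inter (measurableSet_lt measurable_snd measurable_fst))
    (hf.mono_set inter_subset_left) (hf.mono_set inter_subset_left), hunion]
  exact setIntegral_congr_set (sdiff_null_ae_eq_self (Measure.prod_diagonal_eq_zero _ _))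

lemma setIntegral_Ioi_prod_Ioi_inter_fst_lt_snd {f : ℝ × ℝ → E}
    (hf : IntegrableOn f (Ioi 0 ×ˢ Ioi 0)) :
    ∫ p in Ioi 0 ×ˢ Ioi 0 ∩ {p | p.1 < p.2}, f p = ∫ t in Ioi 0, ∫ x in Ioi 0, f (x, x + t) := by
  have shear : MeasurePreserving (fun p : ℝ × ℝ => (p.1, p.1 + p.2)) :=
    measurePreserving_prod_add volume volume
  have emb := (MeasurableEquiv.shearAddRight ℝ).measurableEmbedding
  have hpre : (fun p : ℝ × ℝ => (p.1, p.1 + p.2)) ⁻¹' (Ioi 0 ×ˢ Ioi 0 ∩ {p | p.1 < p.2})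
      = Ioi 0 ×ˢ Ioi 0 := by
    ext ⟨x, t⟩
    simp only [mem_preimage, mem_inter_iff, mem_prod, mem_Ioi, mem_ofPred_eq]
    constructor
    · rintro ⟨⟨hx, -⟩, hxt⟩; exact ⟨hx, by linarith⟩
    · rintro ⟨hx, ht⟩; exact ⟨⟨hx, by linarith⟩, by linarith⟩
  have hf' : IntegrableOn (fun p : ℝ × ℝ => f (p.1, p.1 + p.2)) (Ioi 0 ×ˢ Ioi 0) := by
    rw [← hpre]
    exact (shear.integrableOn_comp_preimage emb).2 (hf.mono_set inter_subset_left)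
  rw [← shear.setIntegral_preimage_emb emb, hpre, Measure.volume_eq_prod, ← Measure.prod_restrict]
  rw [IntegrableOn, Measure.volume_eq_prod, ← Measure.prod_restrict] at hf'
  exact integral_prod_symm _ hf'

lemma setIntegral_Ioi_prod_Ioi_eq_add {f : ℝ × ℝ → E}
    (hf : IntegrableOn f (Ioi 0 ×ˢ Ioi 0)) :
    ∫ p in Ioi 0 ×ˢ Ioi 0, f p =
      (∫ t in Ioi 0, ∫ x in Ioi 0, f (x, x + t)) + ∫ t in Ioi 0, ∫ x in Ioi 0, f (x + t, x) := by
  have swap : MeasurePreserving (Prod.swap : ℝ × ℝ → ℝ × ℝ) := Measure.measurePreserving_swap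
  have emb := (MeasurableEquiv.prodComm (α := ℝ) (β := ℝ)).measurableEmbedding
  have hpre : Prod.swap ⁻¹' (Ioi 0 ×ˢ Ioi 0 ∩ {p : ℝ × ℝ | p.2 < p.1}) =
      Ioi 0 ×ˢ Ioi 0 ∩ {p | p.1 < p.2} := by
    ext; simp [and_comm]
  have hf_swap : IntegrableOn (f ∘ Prod.swap) (Ioi 0 ×ˢ Ioi 0) := by
    rwa [← preimage_swap_prod, swap.integrableOn_comp_preimage emb]
  rw [← setIntegral_inter_fst_lt_snd_add_inter_snd_lt_fst
      (measurableSet_Ioi.prod measurableSet_Ioi) hf,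
    ← swap.setIntegral_preimage_emb emb _ (Ioi 0 ×ˢ Ioi 0 ∩ {p | p.2 < p.1}), hpre,
    setIntegral_Ioi_prod_Ioi_inter_fst_lt_snd hf]
  exact congrArg _ (setIntegral_Ioi_prod_Ioi_inter_fst_lt_snd hf_swap)

theorem product_integrals_convolution_split_general
    (g h : ℝ → ℂ)
    (hg : IntegrableOn g (Ioi 0)) (hh : IntegrableOn h (Ioi 0)) :
    (∫ x in Ioi (0:ℝ), g x) * (∫ x in Ioi (0:ℝ), h x) =
      (∫ t in Ioi (0:ℝ), ∫ x in Ioi (0:ℝ), g x * h (x + t)) +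
        (∫ t in Ioi (0:ℝ), ∫ x in Ioi (0:ℝ), h x * g (x + t)) := by
  have hgh : IntegrableOn (fun p : ℝ × ℝ => g p.1 * h p.2) (Ioi 0 ×ˢ Ioi 0) := by
    rw [IntegrableOn, Measure.volume_eq_prod, ← Measure.prod_restrict]
    exact hg.mul_prod hh
  rw [← setIntegral_prod_mul, ← Measure.volume_eq_prod, setIntegral_Ioi_prod_Ioi_eq_add hgh]
  simp_rw [mul_comm (g (_ + _))]

/-- The auxiliary identity (40): for integrable `g, h` on `(0,∞)`,
`(∫₀^∞ g)(∫₀^∞ h) = ∫₀^∞∫₀^∞ g(x)h(x+t) dx dt + ∫₀^∞∫₀^∞ h(x)g(x+t) dx dt`. -/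
theorem product_integrals_convolution_split
    (g h : ℝ → ℂ) (hgm : Measurable g) (hhm : Measurable h)
    (hg : IntegrableOn g (Ioi 0)) (hh : IntegrableOn h (Ioi 0)) :
    (∫ x in Ioi (0:ℝ), g x) * (∫ x in Ioi (0:ℝ), h x) =
      (∫ t in Ioi (0:ℝ), ∫ x in Ioi (0:ℝ), g x * h (x + t)) +
        (∫ t in Ioi (0:ℝ), ∫ x in Ioi (0:ℝ), h x * g (x + t)) :=
  product_integrals_convolution_split_general g h hg hh
end

section
/- Let ν ∈ ℂ with Re ν > 0 and let t ∈ ℝ with t > 0. Then ∫₀^∞ e^(−x²/2 − (x+t)²/2) · x^(ν−1) · (x+t)^(ν−1) dx = (1/2) · (t/2)^(2ν−1) · ∫₀^∞ e^(−(t²/4)·(u+2)) · u^(ν−1) · (1+u)^(−1/2) du. (This is the intermediate identity (42): the left-hand side equals (Γ(ν)/2)·(t/2)^(2ν−1)·e^(−t²/2)·Ψ(ν, ν+1/2; t²/4), proved by the substitution x = (t/2)(√(u+1) − 1).) -/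
/-!
Substitute `x = (t/2)(√(u+1) - 1)`. This is an increasing bijection of `(0, ∞)` onto itself with
`dx = t / (4√(u+1)) du`, and it is chosen so that `x (x + t) = (t/2)² u` and
`x² + (x + t)² = (t²/2)(u + 2)`. Hence the two integrands agree pointwise after the change of
variables.
-/

open MeasureTheory Complex Set

noncomputable def sqrtSubst (t u : ℝ) : ℝ := t / 2 * (√(u + 1) - 1)

section sqrtSubst

variable {t u : ℝ}

lemma one_lt_sqrt_add_one (hu : 0 < u) : 1 < √(u + 1) :=
  (Real.lt_sqrt zero_le_one).2 (by linarith)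

lemma sqrtSubst_pos (ht : 0 < t) (hu : 0 < u) : 0 < sqrtSubst t u :=
  mul_pos (half_pos ht) (sub_pos.2 (one_lt_sqrt_add_one hu))

lemma strictMonoOn_sqrtSubst (ht : 0 < t) : StrictMonoOn (sqrtSubst t) (Ioi 0) :=
  fun a ha b _ hab => mul_lt_mul_of_pos_left
    (sub_lt_sub_right (Real.sqrt_lt_sqrt (by linarith [mem_Ioi.1 ha]) (by linarith)) 1)
    (half_pos ht)

lemma sqrtSubst_image_Ioi (ht : 0 < t) : sqrtSubst t '' Ioi 0 = Ioi 0 := by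
  refine Subset.antisymm (image_subset_iff.2 fun u hu => sqrtSubst_pos ht hu) fun x hx => ?_
  have hx : 0 < 2 * x / t := div_pos (mul_pos two_pos hx) ht
  refine ⟨(2 * x / t + 1) ^ 2 - 1, by rw [mem_Ioi]; nlinarith, ?_⟩
  rw [sqrtSubst, sub_add_cancel, Real.sqrt_sq (by positivity)]
  field_simp
  ring

lemma hasDerivAt_sqrtSubst (t : ℝ) (hu : -1 < u) :
    HasDerivAt (sqrtSubst t) (t / (4 * √(u + 1))) u := by
  have hsqrt : HasDerivAt (sqrtSubst t) (t / 2 * (1 / (2 * √(u + 1)) * 1)) u :=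
    ((Real.hasDerivAt_sqrt (by linarith : u + 1 ≠ 0)).comp u
      ((hasDerivAt_id u).add_const 1)).sub_const 1 |>.const_mul (t / 2)
  exact hsqrt.congr_deriv (by ring)

lemma sqrtSubst_mul_add_self (hu : -1 ≤ u) :
    sqrtSubst t u * (sqrtSubst t u + t) = (t / 2) ^ 2 * u := by
  have := Real.sq_sqrt (by linarith : 0 ≤ u + 1)
  unfold sqrtSubst
  linear_combination (t ^ 2 / 4) * this

lemma sqrtSubst_sq_add_sq (hu : -1 ≤ u) :
    sqrtSubst t u ^ 2 + (sqrtSubst t u + t) ^ 2 = t ^ 2 / 2 * (u + 2) := by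
  have := Real.sq_sqrt (by linarith : 0 ≤ u + 1)
  unfold sqrtSubst
  linear_combination (t ^ 2 / 2) * this

theorem integral_Ioi_eq_integral_comp_sqrtSubst {E : Type*} [NormedAddCommGroup E]
    [NormedSpace ℝ E] (ht : 0 < t) (g : ℝ → E) :
    ∫ x in Ioi 0, g x = ∫ u in Ioi 0, (t / (4 * √(u + 1))) • g (sqrtSubst t u) := by
  conv_lhs => rw [← sqrtSubst_image_Ioi ht]
  rw [integral_image_eq_integral_abs_deriv_smul measurableSet_Ioi
    (fun u hu => (hasDerivAt_sqrtSubst t (by linarith [mem_Ioi.1 hu])).hasDerivWithinAt)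
    (strictMonoOn_sqrtSubst ht).injOn]
  refine setIntegral_congr_fun measurableSet_Ioi fun u hu => ?_
  have : 0 < √(u + 1) := Real.sqrt_pos.2 (by linarith [mem_Ioi.1 hu])
  rw [abs_of_pos (by positivity)]

end sqrtSubst

lemma Complex.ofReal_cpow_neg_half {x : ℝ} (hx : 0 ≤ x) :
    (x : ℂ) ^ (-(1 : ℂ) / 2) = ((√x)⁻¹ : ℝ) := by
  rw [show -(1 : ℂ) / 2 = ((-(1 / 2) : ℝ) : ℂ) by push_cast; ring, ← ofReal_cpow hx,
    Real.rpow_neg hx, Real.sqrt_eq_rpow]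

lemma Complex.cpow_two_mul_sub_one {a : ℂ} (ha : a ≠ 0) (ν : ℂ) :
    a ^ (2 * ν - 1) = a ^ (ν - 1) * a ^ (ν - 1) * a := by
  rw [show 2 * ν - 1 = (ν - 1) + (ν - 1) + 1 by ring, cpow_add _ _ ha, cpow_add _ _ ha, cpow_one]

lemma integrand_comp_sqrtSubst (ν : ℂ) {t u : ℝ} (ht : 0 < t) (hu : 0 < u) :
    (t / (4 * √(u + 1))) • (Complex.exp (-(sqrtSubst t u : ℂ) ^ 2 / 2 -
        ((sqrtSubst t u + t : ℝ) : ℂ) ^ 2 / 2) *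
        (sqrtSubst t u : ℂ) ^ (ν - 1) * ((sqrtSubst t u + t : ℝ) : ℂ) ^ (ν - 1)) =
      (1 / 2 : ℂ) * ((t / 2 : ℝ) : ℂ) ^ (2 * ν - 1) *
        (Complex.exp (-((t : ℂ) ^ 2 / 4) * ((u : ℂ) + 2)) * (u : ℂ) ^ (ν - 1) *
          ((1 : ℂ) + (u : ℂ)) ^ (-(1 : ℂ) / 2)) := by
  have hx := sqrtSubst_pos ht hu
  have ht2 : 0 < t / 2 := half_pos ht
  have hsqrt : 0 < √(u + 1) := Real.sqrt_pos.2 (by linarith)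
  have hexp : -(sqrtSubst t u : ℂ) ^ 2 / 2 - ((sqrtSubst t u + t : ℝ) : ℂ) ^ 2 / 2 =
      -((t : ℂ) ^ 2 / 4) * ((u : ℂ) + 2) := by
    have := congrArg ((↑) : ℝ → ℂ) (sqrtSubst_sq_add_sq (t := t) (by linarith : -1 ≤ u))
    push_cast at this ⊢
    linear_combination -this / 2
  have hpow : (sqrtSubst t u : ℂ) ^ (ν - 1) * ((sqrtSubst t u + t : ℝ) : ℂ) ^ (ν - 1) =
      ((t / 2 : ℝ) : ℂ) ^ (ν - 1) * ((t / 2 : ℝ) : ℂ) ^ (ν - 1) *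
        (u : ℂ) ^ (ν - 1) := by
    rw [← mul_cpow_ofReal_nonneg hx.le (by linarith), ← ofReal_mul,
      sqrtSubst_mul_add_self (by linarith), sq, ofReal_mul,
      mul_cpow_ofReal_nonneg (by positivity) hu.le, ofReal_mul,
      mul_cpow_ofReal_nonneg ht2.le ht2.le]
  rw [show (1 : ℂ) + u = ((u + 1 : ℝ) : ℂ) by push_cast; ring,
    ofReal_cpow_neg_half (by linarith), cpow_two_mul_sub_one (ofReal_ne_zero.2 ht2.ne'), hexp,
    mul_assoc (Complex.exp _), hpow, real_smul]
  push_cast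
  field_simp
  ring

theorem convolution_kernel_psi_identity_general
    (ν : ℂ) (t : ℝ) (ht : 0 < t) :
    (∫ x in Ioi (0:ℝ),
        Complex.exp (-(x:ℂ)^2 / 2 - ((x + t : ℝ) : ℂ)^2 / 2) *
          (x:ℂ) ^ (ν - 1) * ((x + t : ℝ) : ℂ) ^ (ν - 1)) =
      (1/2 : ℂ) * ((t/2 : ℝ) : ℂ) ^ (2 * ν - 1) *
        ∫ u in Ioi (0:ℝ),
          Complex.exp (-((t:ℂ)^2 / 4) * ((u:ℂ) + 2)) * (u:ℂ) ^ (ν - 1) *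
            ((1:ℂ) + (u:ℂ)) ^ (-(1:ℂ)/2) := by
  rw [integral_Ioi_eq_integral_comp_sqrtSubst ht, ← integral_const_mul]
  exact setIntegral_congr_fun measurableSet_Ioi fun u hu => integrand_comp_sqrtSubst ν ht hu

/-- Intermediate identity (42): `∫₀^∞ e^(-x²/2-(x+t)²/2) x^(ν-1) (x+t)^(ν-1) dx
= (1/2)(t/2)^(2ν-1) ∫₀^∞ e^(-(t²/4)(u+2)) u^(ν-1) (1+u)^(-1/2) du`, i.e. the left-hand
side equals `(Γ(ν)/2)(t/2)^(2ν-1) e^(-t²/2) Ψ(ν, ν+1/2; t²/4)`. -/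
theorem convolution_kernel_psi_identity
    (ν : ℂ) (hν : 0 < ν.re) (t : ℝ) (ht : 0 < t) :
    (∫ x in Ioi (0:ℝ),
        Complex.exp (-(x:ℂ)^2 / 2 - ((x + t : ℝ) : ℂ)^2 / 2) *
          (x:ℂ) ^ (ν - 1) * ((x + t : ℝ) : ℂ) ^ (ν - 1)) =
      (1/2 : ℂ) * ((t/2 : ℝ) : ℂ) ^ (2 * ν - 1) *
        ∫ u in Ioi (0:ℝ),
          Complex.exp (-((t:ℂ)^2 / 4) * ((u:ℂ) + 2)) * (u:ℂ) ^ (ν - 1) *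
            ((1:ℂ) + (u:ℂ)) ^ (-(1:ℂ)/2) :=
  convolution_kernel_psi_identity_general ν t ht
end
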